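/- arXiv:1104.0563 — 6 statements merged into one kernel-verified Lean document; each statement's English description precedes it below -/
import Mathlib

section
/- If C is a small category satisfying the right Ore condition (every cospan can be completed to a commutative square) and J_at is the atomic Grothendieck topology on C (where a sieve covers iff it is nonempty), then the topos Sh(C, J_at) of sheaves for J_at is an atomic topos (i.e., every object is a coproduct of atoms). -/
open CategoryTheory Limits

universe u

/-- The right Ore condition: every cospan can be completed to a commutative square. -/
def RightOreCondition (C : Type u) [SmallCategory C] : Prop :=
  ∀ {a b c : C} (f : a ⟶ c) (g : b ⟶ c),
    ∃ (d : C) (h : d ⟶ a) (k : d ⟶ b), h ≫ f = k ≫ g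

/-- `J` is the atomic topology: a sieve covers iff it is nonempty. -/
def IsAtomicTopology {C : Type u} [SmallCategory C] (J : GrothendieckTopology C) : Prop :=
  ∀ (c : C) (S : Sieve c), S ∈ J c ↔ ∃ (d : C) (g : d ⟶ c), S g

/-- An atom in a category: a non-initial object all of whose subobjects are trivial,
i.e. every mono into it is either an isomorphism or has initial domain. -/
def IsAtomObj {E : Type*} [Category E] (X : E) : Prop :=
  (¬ Nonempty (IsInitial X)) ∧
    ∀ (Y : E) (m : Y ⟶ X), Mono m → (Nonempty (IsInitial Y) ∨ IsIso m)

instance sheafTypeHasCoproducts {C : Type u} [SmallCategory C] (J : GrothendieckTopology C) (I : Type u) :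
    HasColimitsOfShape (Discrete I) (Sheaf J (Type u)) :=
  Sheaf.instHasColimitsOfShape

/-!
A sheaf `X` is the coproduct of the subpresheaves cut out by the connected components of its
category of elements. For the atomic topology each of these is again a sheaf, because covering
sieves are nonempty, and the empty presheaf is a sheaf, so the initial sheaves are exactly the
empty ones and no component is initial. By the Ore condition two sections in one component have
a common restriction; hence a subsheaf of a component that has a section contains a restriction
of every section, i.e. the inclusion is locally surjective, and a locally surjective mono of
sheaves is an isomorphism.
-/

namespace CategoryTheory

open Opposite

universe w

def Functor.Elements.HaveCommonRestriction {C : Type*} [Category* C] {P : Cᵒᵖ ⥤ Type*}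
    (a b : P.Elements) : Prop :=
  ∃ (e : C) (f : e ⟶ a.1.unop) (g : e ⟶ b.1.unop), P.map f.op a.2 = P.map g.op b.2

namespace Functor.Elements

section

variable {C : Type*} [Category* C] {P : Cᵒᵖ ⥤ Type*}

theorem haveCommonRestriction_of_hom {a b : P.Elements} (f : a ⟶ b) :
    HaveCommonRestriction a b :=
  ⟨b.1.unop, f.1.unop, 𝟙 _, by simp⟩

theorem HaveCommonRestriction.symm {a b : P.Elements} :
    HaveCommonRestriction a b → HaveCommonRestriction b a :=
  fun ⟨e, f, g, h⟩ => ⟨e, g, f, h.symm⟩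

end

variable {C : Type u} [SmallCategory C] {P : Cᵒᵖ ⥤ Type*}

theorem HaveCommonRestriction.trans (hOre : RightOreCondition C) {a b c : P.Elements}
    (hab : HaveCommonRestriction a b) (hbc : HaveCommonRestriction b c) :
    HaveCommonRestriction a c := by
  obtain ⟨e, f, g, h⟩ := hab
  obtain ⟨e', f', g', h'⟩ := hbc
  obtain ⟨d, u, v, huv⟩ := hOre g f'
  refine ⟨d, u ≫ f, v ≫ g', ?_⟩
  simp only [op_comp, Functor.map_comp_apply, h, ← h']
  simp only [← Functor.map_comp_apply, ← op_comp, huv]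

theorem haveCommonRestriction_of_zigzag (hOre : RightOreCondition C) {a b : P.Elements}
    (h : Zigzag a b) : HaveCommonRestriction a b := by
  induction h with
  | refl => exact haveCommonRestriction_of_hom (𝟙 a)
  | tail _ hzag ih =>
    refine ih.trans hOre ?_
    rcases hzag with ⟨⟨f⟩⟩ | ⟨⟨f⟩⟩
    · exact haveCommonRestriction_of_hom f
    · exact (haveCommonRestriction_of_hom f).symm

end Functor.Elements

section Components

variable {D : Type*} [Category* D] (F : D ⥤ Type w)

theorem ConnectedComponents.mk_elementsMk_map {d d' : D} (f : d ⟶ d') (x : F.obj d) :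
    ConnectedComponents.mk (F.elementsMk d' (F.map f x)) = .mk (F.elementsMk d x) :=
  Quotient.sound' (Zigzag.of_inv (CategoryOfElements.homMk (F.elementsMk d x) _ f rfl))

def Functor.componentSubfunctor (i : ConnectedComponents F.Elements) : Subfunctor F where
  obj d := {x | .mk (F.elementsMk d x) = i}
  map f x hx := (ConnectedComponents.mk_elementsMk_map F f x).trans hx

variable {F} {G : D ⥤ Type w} (φ : ∀ i, (F.componentSubfunctor i).toFunctor ⟶ G)

theorem Functor.app_componentSubfunctor_congr {d : D} {x : F.obj d}
    {i j : ConnectedComponents F.Elements} (hi : x ∈ (F.componentSubfunctor i).obj d)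
    (hj : x ∈ (F.componentSubfunctor j).obj d) :
    (φ i).app d ⟨x, hi⟩ = (φ j).app d ⟨x, hj⟩ := by
  obtain rfl := hi.symm.trans hj
  rfl

def Functor.descComponents : F ⟶ G where
  app d := ↾fun x => (φ (.mk (F.elementsMk d x))).app d ⟨x, rfl⟩
  naturality d d' f := by
    ext x
    exact (F.app_componentSubfunctor_congr φ _ _).trans
      (NatTrans.naturality_apply (φ (.mk (F.elementsMk d x))) f ⟨x, rfl⟩)

theorem Functor.ι_descComponents (i : ConnectedComponents F.Elements) :
    (F.componentSubfunctor i).ι ≫ F.descComponents φ = φ i := by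
  ext d ⟨x, hx⟩
  exact F.app_componentSubfunctor_congr φ _ _

theorem Functor.descComponents_unique (m : F ⟶ G)
    (hm : ∀ i, (F.componentSubfunctor i).ι ≫ m = φ i) : m = F.descComponents φ := by
  ext d x
  exact ConcreteCategory.congr_hom (NatTrans.congr_app (hm (.mk (F.elementsMk d x))) d) ⟨x, rfl⟩

end Components

namespace IsAtomicTopology

variable {C : Type u} [SmallCategory C] {J : GrothendieckTopology C}

theorem isSheaf_componentSubfunctor (hJ : IsAtomicTopology J) {P : Cᵒᵖ ⥤ Type w}
    (hP : Presieve.IsSheaf J P) (i : ConnectedComponents P.Elements) :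
    Presieve.IsSheaf J (P.componentSubfunctor i).toFunctor := by
  refine (Subfunctor.isSheaf_iff _ hP).2 fun c x hx => ?_
  obtain ⟨d, g, hg⟩ := (hJ _ _).1 hx
  exact (ConnectedComponents.mk_elementsMk_map P g.op x).symm.trans hg

theorem isSheaf_const_pEmpty (hJ : IsAtomicTopology J) :
    Presieve.IsSheaf J ((Functor.const Cᵒᵖ).obj PEmpty.{w + 1}) := by
  intro c S hS x _
  obtain ⟨d, g, hg⟩ := (hJ c S).1 hS
  exact (x g hg).elim

theorem nonempty_isInitial_iff (hJ : IsAtomicTopology J) (Y : Sheaf J (Type w)) :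
    Nonempty (IsInitial Y) ↔ ∀ c, IsEmpty (Y.obj.obj c) := by
  constructor
  · rintro ⟨hY⟩ c
    let E : Sheaf J (Type w) :=
      ⟨(Functor.const Cᵒᵖ).obj PEmpty,
        (isSheaf_iff_isSheaf_of_type _ _).2 hJ.isSheaf_const_pEmpty⟩
    exact ⟨fun y => ((hY.to E).hom.app c y).elim⟩
  · intro hY
    have h : IsInitial Y.obj :=
      Functor.isInitial fun c => ((Types.initial_iff_empty _).2 (hY c)).some
    exact ⟨IsInitial.ofUniqueHom (fun Z => ObjectProperty.homMk (h.to Z.obj))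
      fun Z _ => (fullyFaithfulSheafToPresheaf J _).map_injective (h.hom_ext _ _)⟩

variable (hJ : IsAtomicTopology J) (X : Sheaf J (Type u))

def componentSheaf (i : ConnectedComponents X.obj.Elements) : Sheaf J (Type u) :=
  ⟨(X.obj.componentSubfunctor i).toFunctor, (isSheaf_iff_isSheaf_of_type _ _).2
    (hJ.isSheaf_componentSubfunctor ((isSheaf_iff_isSheaf_of_type _ _).1 X.property) i)⟩

def componentCofan : Cofan (hJ.componentSheaf X) :=
  Cofan.mk X fun i => ObjectProperty.homMk (X.obj.componentSubfunctor i).ι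

def isColimitComponentCofan : IsColimit (hJ.componentCofan X) :=
  Cofan.IsColimit.mk _
    (fun s => ObjectProperty.homMk (X.obj.descComponents fun i => (s.inj i).hom))
    (fun s i => Sheaf.hom_ext (X.obj.ι_descComponents (fun i => (s.inj i).hom) i))
    (fun s m hm => Sheaf.hom_ext (X.obj.descComponents_unique (fun i => (s.inj i).hom) m.hom
      fun i => congrArg (·.hom) (hm i)))

theorem isIso_of_mono_of_nonempty (hOre : RightOreCondition C)
    {i : ConnectedComponents X.obj.Elements} {Y : Sheaf J (Type u)}
    (m : Y ⟶ hJ.componentSheaf X i) [Mono m] {c₀ : Cᵒᵖ} (y₀ : Y.obj.obj c₀) :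
    IsIso m := by
  have : Sheaf.IsLocallySurjective m := ⟨fun {c} x => by
    obtain ⟨e, f, g, h⟩ := Functor.Elements.haveCommonRestriction_of_zigzag hOre
      (Quotient.exact' (x.2.trans (m.hom.app c₀ y₀).2.symm))
    refine (hJ _ _).2 ⟨e, f, Y.obj.map g.op y₀, Subtype.ext ?_⟩
    rw [NatTrans.naturality_apply]
    exact h.symm⟩
  exact isIso_of_mono_of_epi m

theorem isAtomObj_componentSheaf (hOre : RightOreCondition C)
    (i : ConnectedComponents X.obj.Elements) : IsAtomObj (hJ.componentSheaf X i) := by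
  refine ⟨?_, fun Y m _ => ?_⟩
  · obtain ⟨⟨c, x⟩, rfl⟩ := Quotient.exists_rep i
    rw [hJ.nonempty_isInitial_iff]
    exact fun h => (h c).false ⟨x, rfl⟩
  · by_cases hY : ∀ c, IsEmpty (Y.obj.obj c)
    · exact .inl ((hJ.nonempty_isInitial_iff Y).2 hY)
    · obtain ⟨c₀, hc₀⟩ := not_forall.1 hY
      obtain ⟨y₀⟩ := not_isEmpty_iff.1 hc₀
      exact .inr (hJ.isIso_of_mono_of_nonempty X hOre m y₀)

end IsAtomicTopology

end CategoryTheory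

/-- If `C` satisfies the right Ore condition and `J` is the atomic topology on `C`,
then `Sh(C, J)` is an atomic topos: every object is a coproduct of atoms. -/
theorem atomicTopology_sheaves_atomic (C : Type u) [SmallCategory C]
    (hOre : RightOreCondition C) (J : GrothendieckTopology C)
    (hJ : IsAtomicTopology J) :
    ∀ X : Sheaf J (Type u), ∃ (I : Type u) (f : I → Sheaf J (Type u)),
      (∀ i, IsAtomObj (f i)) ∧ Nonempty (X ≅ ∐ f) := by
  intro X
  exact ⟨_, hJ.componentSheaf X, hJ.isAtomObj_componentSheaf X hOre,
    ⟨(hJ.isColimitComponentCofan X).coconePointUniqueUpToIso (colimit.isColimit _)⟩⟩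
end

section
/- For a site (C, J), the subtoposes of Sh(C, J) (i.e., geometric inclusions into Sh(C, J), up to equivalence) are in bijective correspondence with the Grothendieck topologies J' on C that contain J. -/
open CategoryTheory Limits

universe u

/-- A (replete) full subcategory `P` of a category `E` is a subtopos if it is closed under
isomorphism and the inclusion functor admits a finite-limit-preserving left adjoint
(i.e. it is the direct image part of a geometric inclusion). -/
def IsSubtopos {E : Type*} [Category E] (P : E → Prop) : Prop :=
  (∀ X Y : E, (X ≅ Y) → P X → P Y) ∧
    ∃ _ : Reflective (ObjectProperty.ι P),
      Nonempty (PreservesFiniteLimits (reflector (ObjectProperty.ι P)))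

/-!
A topology is determined by its sheaves, so `J' ↦ Sh(C, J')` is injective. Conversely, a subtopos
of `Sh(C, J)` is a reflective subcategory `i : D ⥤ Psh(C)` of presheaves with left exact reflector
`L`; let `J'` be the finest topology for which every object of the image of `i` is a sheaf.
Precomposition with a morphism inverted by `L` is bijective on maps into the image, so objects of
the image are sheaves for every sieve whose inclusion `L` inverts, and `J'` contains every such
sieve all of whose pullbacks are again inverted. For a `J'`-sheaf `F`, `L` inverts the unit `η : F ⟶ i L F`, and left exactness
makes `L` invert the equalizer sieves and the image sieves of `η`: so `η` is a locally bijective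
morphism of `J'`-sheaves, hence an isomorphism, and `F` lies in the image of `i`.
-/

universe v

namespace CategoryTheory

open Opposite

section Presheaf

variable {C : Type u} [Category.{v} C]

lemma Presieve.isSheafFor_iff_bijective_functorInclusion_comp {P : Cᵒᵖ ⥤ Type v} {X : C}
    (S : Sieve X) :
    Presieve.IsSheafFor P S.arrows ↔
      Function.Bijective (fun g : yoneda.obj X ⟶ P => S.functorInclusion ≫ g) := by
  rw [Presieve.isSheafFor_iff_yonedaSheafCondition, Function.bijective_iff_existsUnique]
  rfl

lemma Presheaf.pullback_equalizerSieve {F : Cᵒᵖ ⥤ Type v} {X : C} (a b : F.obj (op X)) {Y : C}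
    (f : Y ⟶ X) :
    (Presheaf.equalizerSieve (F := F) (X := op X) a b).pullback f =
      Presheaf.equalizerSieve (F := F) (X := op Y) (F.map f.op a) (F.map f.op b) := by
  ext Z g
  simp [Presheaf.equalizerSieve]

noncomputable def Presheaf.isLimitForkFunctorInclusionEqualizerSieve {F : Cᵒᵖ ⥤ Type v} {X : C}
    (a b : F.obj (op X)) :
    IsLimit (Fork.ofι (f := yonedaEquiv.symm a) (g := yonedaEquiv.symm b)
      (Presheaf.equalizerSieve (F := F) (X := op X) a b).functorInclusion
      (by ext _ ⟨_, hg⟩; exact hg)) :=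
  evaluationJointlyReflectsLimits _ fun _ => (isLimitMapConeForkEquiv _ _).symm
    (Types.typeEqualizerOfUnique _ _ fun g hg => ⟨⟨g, hg⟩, rfl, fun _ h => Subtype.ext h⟩)

lemma Presheaf.exists_isPullback_functorInclusion_imageSieve {F G : Cᵒᵖ ⥤ Type v} (m : F ⟶ G)
    [Mono m] {X : C} (x : G.obj (op X)) :
    ∃ t, IsPullback t (Presheaf.imageSieve m x).functorInclusion m (yonedaEquiv.symm x) := by
  have hm (Z : Cᵒᵖ) : Function.Injective (m.app Z) := (mono_iff_injective _).1 inferInstance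
  let t : (Presheaf.imageSieve m x).functor ⟶ F :=
    { app Z := TypeCat.ofHom fun g => Presheaf.localPreimage m x g.1 g.2
      naturality Z Z' h := by
        ext g
        apply hm
        refine (Presheaf.app_localPreimage m x (h.unop ≫ g.1) _).trans ?_
        change _ = m.app _ (F.map h _)
        rw [NatTrans.naturality_apply, op_comp, Functor.map_comp_apply]
        exact congrArg (G.map h) (Presheaf.app_localPreimage m x g.1 g.2).symm }
  refine ⟨t, IsPullback.of_forall_isPullback_app fun Z => ?_⟩
  rw [Types.isPullback_iff]
  refine ⟨?_, ?_, ?_⟩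
  · ext g
    exact Presheaf.app_localPreimage m x g.1 g.2
  · rintro g g' ⟨-, h⟩
    exact Subtype.ext h
  · intro y g h
    exact ⟨⟨g, y, h⟩, hm _ ((Presheaf.app_localPreimage m x g _).trans h.symm), rfl⟩

section Reflective

variable {D : Type*} [Category D] (i : D ⥤ (Cᵒᵖ ⥤ Type v)) [Reflective i]

lemma isSheafFor_of_isIso_reflector_map {X : C} (S : Sieve X)
    [IsIso ((reflector i).map S.functorInclusion)] {G : Cᵒᵖ ⥤ Type v} (hG : i.essImage G) :
    Presieve.IsSheafFor G S.arrows := by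
  have hS := (ObjectProperty.isLocal_iff_isIso_map (reflectorAdjunction i) _).2 ‹_›
  rw [← ObjectProperty.isoClosure_isLocal, Functor.isoClosure_eq_essImage] at hS
  exact (Presieve.isSheafFor_iff_bijective_functorInclusion_comp S).2 (hS G hG)

lemma mem_finestTopology_essImage_of_isIso_reflector_map {X : C} (S : Sieve X)
    (hS : ∀ ⦃Y : C⦄ (f : Y ⟶ X), IsIso ((reflector i).map (S.pullback f).functorInclusion)) :
    S ∈ Sheaf.finestTopology i.essImage X :=
  Sheaf.mem_finestTopology_of_forall_isSheafFor fun _ hG _ f =>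
    have := hS f
    isSheafFor_of_isIso_reflector_map i _ hG

variable [PreservesFiniteLimits (reflector i)]

lemma isIso_reflector_map_functorInclusion_equalizerSieve {F G : Cᵒᵖ ⥤ Type v} (u : F ⟶ G)
    [IsIso ((reflector i).map u)] {X : C} {a b : F.obj (op X)} (hab : u.app _ a = u.app _ b) :
    IsIso ((reflector i).map
      (Presheaf.equalizerSieve (F := F) (X := op X) a b).functorInclusion) := by
  have hL : (reflector i).map (yonedaEquiv.symm a) = (reflector i).map (yonedaEquiv.symm b) := by
    rw [← cancel_mono ((reflector i).map u), ← Functor.map_comp, ← Functor.map_comp,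
      yonedaEquiv_symm_naturality_right, yonedaEquiv_symm_naturality_right, hab]
  exact isIso_limit_cone_parallelPair_of_eq hL
    (isLimitForkMapOfIsLimit _ _ (Presheaf.isLimitForkFunctorInclusionEqualizerSieve a b))

lemma isIso_reflector_map_functorInclusion_imageSieve {F G : Cᵒᵖ ⥤ Type v} (m : F ⟶ G) [Mono m]
    [IsIso ((reflector i).map m)] {X : C} (x : G.obj (op X)) :
    IsIso ((reflector i).map (Presheaf.imageSieve m x).functorInclusion) := by
  obtain ⟨t, ht⟩ := Presheaf.exists_isPullback_functorInclusion_imageSieve m x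
  exact (ht.map (reflector i)).isIso_snd_of_isIso

lemma isLocallyInjective_finestTopology_essImage {F G : Cᵒᵖ ⥤ Type v} (u : F ⟶ G)
    [IsIso ((reflector i).map u)] :
    Presheaf.IsLocallyInjective (Sheaf.finestTopology i.essImage) u where
  equalizerSieve_mem {X} a b hab :=
    mem_finestTopology_essImage_of_isIso_reflector_map i _ fun _ f => by
      rw [Presheaf.pullback_equalizerSieve]
      exact isIso_reflector_map_functorInclusion_equalizerSieve i u
        (by rw [NatTrans.naturality_apply, NatTrans.naturality_apply, hab])

lemma isLocallySurjective_finestTopology_essImage {F G : Cᵒᵖ ⥤ Type v} (m : F ⟶ G) [Mono m]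
    [IsIso ((reflector i).map m)] :
    Presheaf.IsLocallySurjective (Sheaf.finestTopology i.essImage) m where
  imageSieve_mem x := mem_finestTopology_essImage_of_isIso_reflector_map i _ fun _ f => by
    rw [Presheaf.pullback_imageSieve]
    exact isIso_reflector_map_functorInclusion_imageSieve i m _

theorem essImage_of_isSheaf_finestTopology_essImage {F : Cᵒᵖ ⥤ Type v}
    (hF : Presheaf.IsSheaf (Sheaf.finestTopology i.essImage) F) : i.essImage F := by
  set J' := Sheaf.finestTopology i.essImage
  let η := (reflectorAdjunction i).unit.app F
  have : IsIso ((reflector i).map η) :=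
    (ObjectProperty.isLocal_iff_isIso_map (reflectorAdjunction i) η).1
      (ObjectProperty.isLocal_adj_unit_app _ F)
  have hinj : Presheaf.IsLocallyInjective J' η := isLocallyInjective_finestTopology_essImage i η
  have : Mono η := by
    rw [NatTrans.mono_iff_mono_app]
    intro X
    rw [mono_iff_injective]
    intro a b hab
    exact (((isSheaf_iff_isSheaf_of_type J' F).1 hF).isSeparated _
      (Presheaf.equalizerSieve_mem J' η a b hab)).ext fun _ _ hf => by exact hf
  have hsurj := isLocallySurjective_finestTopology_essImage i η
  let η' : (⟨F, hF⟩ : Sheaf J' (Type v)) ⟶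
      ⟨i.obj ((reflector i).obj F), (isSheaf_iff_isSheaf_of_type J' _).2
        (Sheaf.sheaf_for_finestTopology _ (i.obj_mem_essImage _))⟩ :=
    ObjectProperty.homMk η
  have : IsIso η' := (Sheaf.isLocallyBijective_iff_isIso η').1 ⟨hinj, hsurj⟩
  rw [← (reflectorAdjunction i).isIso_unit_app_iff_mem_essImage]
  exact (inferInstance : IsIso η'.hom)

theorem isSheaf_finestTopology_essImage_iff {F : Cᵒᵖ ⥤ Type v} :
    Presheaf.IsSheaf (Sheaf.finestTopology i.essImage) F ↔ i.essImage F :=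
  ⟨essImage_of_isSheaf_finestTopology_essImage i, fun hF =>
    (isSheaf_iff_isSheaf_of_type _ _).2 (Sheaf.sheaf_for_finestTopology _ hF)⟩

end Reflective

end Presheaf

section Sheaf

variable {C : Type u} [SmallCategory C] {J J' : GrothendieckTopology C}

noncomputable def sheafifyOfLE (h : J ≤ J') :
    Sheaf J (Type u) ⥤
      ObjectProperty.FullSubcategory (fun X : Sheaf J (Type u) => Presheaf.IsSheaf J' X.obj) :=
  ObjectProperty.lift _
    (sheafToPresheaf J _ ⋙ presheafToSheaf J' _ ⋙
      ObjectProperty.ιOfLE fun _ => Presheaf.IsSheaf.of_le h)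
    fun X => ((presheafToSheaf J' _).obj X.obj).property

noncomputable abbrev reflectiveIsSheafOfLE (h : J ≤ J') :
    Reflective (ObjectProperty.ι (fun X : Sheaf J (Type u) => Presheaf.IsSheaf J' X.obj)) where
  L := sheafifyOfLE h
  adj := (sheafificationAdjunction J' (Type u)).restrictFullyFaithful
    (ObjectProperty.fullyFaithfulι _)
    (.ofFullyFaithful (ObjectProperty.lift _ (ObjectProperty.ι _ ⋙ sheafToPresheaf J _)
      fun Y => Y.property))
    (Iso.refl _) (Iso.refl _)

lemma isSubtopos_isSheaf_of_le (h : J ≤ J') :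
    IsSubtopos (fun X : Sheaf J (Type u) => Presheaf.IsSheaf J' X.obj) := by
  refine ⟨fun X Y e hX => ?_, reflectiveIsSheafOfLE h, ⟨?_⟩⟩
  · exact (Presheaf.isSheaf_of_iso_iff ((sheafToPresheaf J _).mapIso e)).1 hX
  · show PreservesFiniteLimits (sheafifyOfLE h)
    have : PreservesFiniteLimits (sheafifyOfLE h ⋙
        ObjectProperty.ι _ ⋙ sheafToPresheaf J (Type u)) :=
      inferInstanceAs (PreservesFiniteLimits
        (sheafToPresheaf J _ ⋙ presheafToSheaf J' _ ⋙ sheafToPresheaf J' _))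
    exact preservesFiniteLimits_of_reflects_of_preserves _
      (ObjectProperty.ι _ ⋙ sheafToPresheaf J _)

lemma exists_isSheaf_eq_of_isSubtopos {P : Sheaf J (Type u) → Prop} (hP : IsSubtopos P) :
    ∃ J' : GrothendieckTopology C, J ≤ J' ∧
      (fun X : Sheaf J (Type u) => Presheaf.IsSheaf J' X.obj) = P := by
  obtain ⟨hiso, _, ⟨_⟩⟩ := hP
  let i := ObjectProperty.ι P ⋙ sheafToPresheaf J (Type u)
  have : PreservesFiniteLimits (reflector i) :=
    inferInstanceAs (PreservesFiniteLimits (presheafToSheaf J _ ⋙ reflector (ObjectProperty.ι P)))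
  refine ⟨Sheaf.finestTopology i.essImage, ?_, funext fun X => propext ?_⟩
  · refine Sheaf.le_finestTopology _ _ fun G ⟨Y, ⟨e⟩⟩ => ?_
    exact Presieve.isSheaf_iso J e ((isSheaf_iff_isSheaf_of_type _ _).1 Y.obj.property)
  · rw [isSheaf_finestTopology_essImage_iff]
    constructor
    · rintro ⟨Y, ⟨e⟩⟩
      exact hiso _ _ ((fullyFaithfulSheafToPresheaf J _).preimageIso e) Y.property
    · intro hX
      exact ⟨⟨X, hX⟩, ⟨Iso.refl _⟩⟩

lemma eq_of_isSheaf_eq {J₁ J₂ : GrothendieckTopology C} (h₁ : J ≤ J₁) (h₂ : J ≤ J₂)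
    (h : (fun X : Sheaf J (Type u) => Presheaf.IsSheaf J₁ X.obj) =
      (fun X : Sheaf J (Type u) => Presheaf.IsSheaf J₂ X.obj)) : J₁ = J₂ := by
  rw [topology_eq_iff_same_sheaves]
  intro F
  rw [← isSheaf_iff_isSheaf_of_type, ← isSheaf_iff_isSheaf_of_type]
  exact ⟨fun hF => Eq.mp (congrFun h ⟨F, hF.of_le h₁⟩) hF,
    fun hF => Eq.mpr (congrFun h ⟨F, hF.of_le h₂⟩) hF⟩

end Sheaf

end CategoryTheory

/-- The subtoposes of `Sh(C, J)` are in bijective correspondence with the Grothendieck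
topologies on `C` containing `J`; the bijection sends such a topology `J'` to the
subtopos of `J'`-sheaves. -/
theorem subtoposes_biject_with_finer_topologies (C : Type u) [SmallCategory C]
    (J : GrothendieckTopology C) :
    ∃ e : {J' : GrothendieckTopology C // J ≤ J'} ≃
          {P : Sheaf J (Type u) → Prop // IsSubtopos P},
      ∀ J' : {J' : GrothendieckTopology C // J ≤ J'},
        (e J').1 = fun X => Presheaf.IsSheaf J'.1 X.val := by
  refine ⟨Equiv.ofBijective (fun J' => ⟨_, isSubtopos_isSheaf_of_le J'.2⟩) ⟨?_, ?_⟩, fun _ => rfl⟩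
  · intro J₁ J₂ h
    exact Subtype.ext (eq_of_isSheaf_eq J₁.2 J₂.2 (congrArg Subtype.val h))
  · rintro ⟨P, hP⟩
    obtain ⟨J', hJ', rfl⟩ := exists_isSheaf_eq_of_isSubtopos hP
    exact ⟨⟨J', hJ'⟩, rfl⟩
end

section
/- The assignment sending a collection A of sieves on a small category C to the smallest Grothendieck topology on C containing A defines a closure operator; moreover, a sieve R belongs to this generated Grothendieck topology if and only if R is derivable from the sieves in A and the maximal sieves using the stability rule (from R on c derive f*(R) for any arrow f with codomain c) and the transitivity rule (from a sieve Z on c and the family {f*(R) : f ∈ Z} derive R). -/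
open CategoryTheory

universe u

variable {C : Type u} [SmallCategory C]

/-- Derivability of a sieve from a collection `A` of sieves and the maximal sieves,
using the stability and transitivity rules of the proof system `T_C^A`. -/
inductive SieveDeriv (A : ∀ c : C, Set (Sieve c)) : ∀ c : C, Sieve c → Prop
  | ax {c : C} {R : Sieve c} : R ∈ A c → SieveDeriv A c R
  | max (c : C) : SieveDeriv A c ⊤
  | stab {c : C} {R : Sieve c} (h : SieveDeriv A c R) {d : C} (f : d ⟶ c) :
      SieveDeriv A d (R.pullback f)
  | trans {c : C} (Z : Sieve c) (hZ : SieveDeriv A c Z) (R : Sieve c)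
      (h : ∀ (d : C) (f : d ⟶ c), Z f → SieveDeriv A d (R.pullback f)) :
      SieveDeriv A c R

/-- The smallest Grothendieck topology containing a given collection of sieves. -/
noncomputable def generatedTopology (A : ∀ c : C, Set (Sieve c)) : GrothendieckTopology C :=
  sInf {J : GrothendieckTopology C | ∀ c : C, A c ⊆ J c}

/-- The derivable sieves form a Grothendieck topology. -/
def derivTopology (A : ∀ c : C, Set (Sieve c)) : GrothendieckTopology C where
  sieves c := {R | SieveDeriv A c R}
  top_mem' c := SieveDeriv.max c
  pullback_stable' _ _ S f hS := hS.stab f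
  transitive' _ S hS R h := SieveDeriv.trans S hS R (fun _ f hf => h hf)

theorem mem_generatedTopology_iff (A : ∀ c : C, Set (Sieve c)) (c : C) (R : Sieve c) :
    R ∈ generatedTopology A c ↔ SieveDeriv A c R := by
  rw [generatedTopology, GrothendieckTopology.mem_sInf]
  constructor
  · intro h
    exact h (derivTopology A) (fun _ _ hR => SieveDeriv.ax hR)
  · intro h J hJ
    induction h with
    | ax hR => exact hJ _ hR
    | max c => exact J.top_mem c
    | stab h f ih => exact J.pullback_stable f ih
    | trans Z hZ R h ihZ ih => exact J.transitive ihZ R (fun Y f hf => ih Y f hf)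

/-- The assignment `A ↦ generatedTopology A` is a closure operator (extensive, monotone,
idempotent), and a sieve belongs to the generated topology iff it is derivable from the
sieves in `A` and the maximal sieves using the stability and transitivity rules. -/
theorem generatedTopology_closure_and_deriv :
    (∀ (A : ∀ c : C, Set (Sieve c)) (c : C), A c ⊆ generatedTopology A c) ∧
    (∀ (A B : ∀ c : C, Set (Sieve c)), (∀ c, A c ⊆ B c) →
      ∀ c : C, (generatedTopology A c : Set (Sieve c)) ⊆ generatedTopology B c) ∧
    (∀ A : ∀ c : C, Set (Sieve c),
      generatedTopology (fun c => (generatedTopology A c : Set (Sieve c))) =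
        generatedTopology A) ∧
    (∀ (A : ∀ c : C, Set (Sieve c)) (c : C) (R : Sieve c),
      R ∈ generatedTopology A c ↔ SieveDeriv A c R) := by
  have ext : ∀ (A : ∀ c : C, Set (Sieve c)) (c : C), A c ⊆ generatedTopology A c :=
    fun A c R hR => (mem_generatedTopology_iff A c R).mpr (SieveDeriv.ax hR)
  have mono : ∀ (A B : ∀ c : C, Set (Sieve c)), (∀ c, A c ⊆ B c) →
      ∀ c : C, (generatedTopology A c : Set (Sieve c)) ⊆ generatedTopology B c := by
    intro A B hAB c R hR
    rw [mem_generatedTopology_iff] at hR ⊢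
    induction hR with
    | ax h => exact SieveDeriv.ax (hAB _ h)
    | max c => exact SieveDeriv.max c
    | stab h f ih => exact ih.stab f
    | trans Z hZ R h ihZ ih => exact SieveDeriv.trans Z ihZ R ih
  refine ⟨ext, mono, ?_, mem_generatedTopology_iff⟩
  intro A
  apply le_antisymm
  · intro c R hR
    rw [mem_generatedTopology_iff] at hR ⊢
    induction hR with
    | ax h => exact (mem_generatedTopology_iff A _ _).mp h
    | max c => exact SieveDeriv.max c
    | stab h f ih => exact ih.stab f
    | trans Z hZ R h ihZ ih => exact SieveDeriv.trans Z ihZ R ih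
  · intro c R hR
    exact mono A _ (fun c => ext A c) c hR
end

section
/- The collection of Grothendieck topologies on a fixed small category C, ordered by inclusion, forms a complete Heyting algebra: arbitrary meets are computed pointwise, and the Heyting implication J ⇒ J' exists for all topologies J, J'. -/
set_option linter.unnecessarySimpa false


open CategoryTheory

universe u

namespace GrothendieckHeytingAux

variable {C : Type u} [SmallCategory C]

/-- The Heyting implication of Grothendieck topologies. -/
def himp (J J' : GrothendieckTopology C) : GrothendieckTopology C where
  sieves c := {S | ∀ ⦃e : C⦄ (g : e ⟶ c) (T : Sieve e),
    S.pullback g ≤ T → T ∈ J e → T ∈ J' e}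
  top_mem' c := by
    intro e g T hT hTJ
    have : T = ⊤ := top_le_iff.mp (by simpa using hT)
    simpa [this] using J'.top_mem e
  pullback_stable' c e S w hS := by
    intro e' g T hT hTJ
    exact hS (g ≫ w) T (by simpa [Sieve.pullback_comp] using hT) hTJ
  transitive' c R hR S hS := by
    -- `W` : the sieve of arrows `u` with `S.pullback u ∈ H`.
    intro e g T hT hTJ
    -- we show `T ∈ J' e` using transitivity of `J'` along the cover
    -- `T' = W.pullback g ⊔ T`.
    set H : ∀ ⦃x : C⦄, Sieve x → Prop := fun x S' => ∀ ⦃e : C⦄ (g : e ⟶ x) (T : Sieve e),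
      S'.pullback g ≤ T → T ∈ J e → T ∈ J' e with hHdef
    have Hmono : ∀ ⦃x : C⦄ {S₁ S₂ : Sieve x}, S₁ ≤ S₂ → H S₁ → H S₂ := by
      intro x S₁ S₂ h12 h1 e' g' T' hT' hT'J
      exact h1 g' T' (le_trans (Sieve.pullback_monotone g' h12) hT') hT'J
    have Hpull : ∀ ⦃x y : C⦄ (w : y ⟶ x) {S' : Sieve x}, H S' → H (S'.pullback w) := by
      intro x y w S' h e' g' T' hT' hT'J
      exact h (g' ≫ w) T' (by simpa [Sieve.pullback_comp] using hT') hT'J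
    let W : Sieve c :=
      { arrows := fun x u => H (S.pullback u)
        downward_closed := by
          intro x y u hu v
          exact Hmono (le_of_eq (S.pullback_comp).symm) (Hpull v hu) }
    have hRW : R ≤ W := fun x u hu => hS hu
    have hW : H (W : Sieve c) := Hmono hRW hR
    -- the auxiliary cover
    let T' : Sieve e := W.pullback g ⊔ T
    have hT'J : T' ∈ J e := J.superset_covering le_sup_right hTJ
    have hT'J' : T' ∈ J' e := hW g T' le_sup_left hT'J
    refine J'.transitive hT'J' T ?_
    intro x u hu
    rcases hu with hu | hu
    · -- `u ≫ g ∈ W`, so `S.pullback (u ≫ g) ∈ H`; conclude via `H` at `x`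
      have hSH : H (S.pullback (u ≫ g)) := hu
      refine hSH (𝟙 x) (T.pullback u) ?_ (J.pullback_stable u hTJ)
      intro y v hv
      apply hT
      simpa [Sieve.pullback_comp] using hv
    · -- `u ∈ T`, so the pullback is maximal
      exact J'.covering_of_eq_top (Sieve.pullback_eq_top_of_mem T hu)

end GrothendieckHeytingAux

/-- The Grothendieck topologies on a fixed small category `C`, ordered by containment,
form a complete Heyting algebra: the order is pointwise containment of covering sieves,
arbitrary meets are computed pointwise, and Heyting implication exists. -/
theorem grothendieckTopologies_completeHeyting (C : Type u) [SmallCategory C] :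
    (∀ J J' : GrothendieckTopology C,
      J ≤ J' ↔ ∀ (c : C) (S : Sieve c), S ∈ J c → S ∈ J' c) ∧
    (∀ (s : Set (GrothendieckTopology C)) (c : C) (S : Sieve c),
      S ∈ sInf s c ↔ ∀ J ∈ s, S ∈ J c) ∧
    (∀ J J' : GrothendieckTopology C, ∃ H : GrothendieckTopology C,
      ∀ K : GrothendieckTopology C, K ≤ H ↔ K ⊓ J ≤ J') := by
  have mem_inf : ∀ (K J : GrothendieckTopology C) (c : C) (S : Sieve c),
      S ∈ (K ⊓ J) c ↔ S ∈ K c ∧ S ∈ J c := by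
    intro K J c S
    rw [← sInf_pair, GrothendieckTopology.mem_sInf]
    simp
  have le_iff : ∀ J J' : GrothendieckTopology C,
      J ≤ J' ↔ ∀ (c : C) (S : Sieve c), S ∈ J c → S ∈ J' c := by
    intro J J'
    constructor
    · intro h c S hS
      exact GrothendieckTopology.le_def.mp h c hS
    · intro h
      exact GrothendieckTopology.le_def.mpr fun c S hS => h c S hS
  refine ⟨le_iff, fun s c S => GrothendieckTopology.mem_sInf s S, ?_⟩
  intro J J'
  refine ⟨GrothendieckHeytingAux.himp J J', fun K => ?_⟩
  constructor
  · -- K ≤ H → K ⊓ J ≤ J'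
    intro hK
    rw [le_iff]
    intro c S hS
    rw [mem_inf] at hS
    have hSH : S ∈ GrothendieckHeytingAux.himp J J' c := GrothendieckTopology.le_def.mp hK c hS.1
    have := hSH (𝟙 c) S (by simp) hS.2
    exact this
  · -- K ⊓ J ≤ J' → K ≤ H
    intro hK
    rw [le_iff]
    intro c S hS
    intro e g T hT hTJ
    have hTK : T ∈ K e := K.superset_covering hT (K.pullback_stable g hS)
    exact GrothendieckTopology.le_def.mp hK e ((mem_inf K J e T).mpr ⟨hTK, hTJ⟩)
end

section
/- A geometric theory T over a signature Σ is (syntactically equivalent to) a coherent theory if and only if the following compactness condition holds: for every coherent formula φ(x⃗) over Σ and every family {ψ_i(x⃗) : i ∈ I} of geometric formulas in the same context, if φ ⊢_x⃗ ⋁_{i∈I} ψ_i is provable in T then φ ⊢_x⃗ ⋁_{i∈I'} ψ_i is provable in T for some finite subset I' ⊆ I. -/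
universe u

/-- A (multi-sorted) first-order signature. -/
structure GeomSignature : Type (u + 1) where
  Sorts : Type u
  Funcs : Type u
  domF : Funcs → List Sorts
  codF : Funcs → Sorts
  Rels : Type u
  domR : Rels → List Sorts

variable {S : GeomSignature.{u}}

/-- A context: a type of variables together with a sort for each variable. -/
structure Ctx (S : GeomSignature.{u}) : Type (u + 1) where
  Var : Type u
  sortOf : Var → S.Sorts

/-- Extend a context by a fresh variable of sort `A`. -/
@[reducible] def Ctx.cons (A : S.Sorts) (Γ : Ctx S) : Ctx S :=
  ⟨Option Γ.Var, fun v => match v with | none => A | some w => Γ.sortOf w⟩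

/-- The empty context. -/
def Ctx.nil (S : GeomSignature.{u}) : Ctx S := ⟨PEmpty, fun v => v.elim⟩

/-- Terms over a signature in a context, indexed by their sort. -/
inductive Term (S : GeomSignature.{u}) : Ctx S → S.Sorts → Type (u + 1)
  | var {Γ : Ctx S} (v : Γ.Var) : Term S Γ (Γ.sortOf v)
  | func {Γ : Ctx S} (f : S.Funcs)
      (args : ∀ i : Fin (S.domF f).length, Term S Γ ((S.domF f).get i)) :
      Term S Γ (S.codF f)

/-- A substitution from context `Γ` to context `Δ`. -/
abbrev Subst (S : GeomSignature.{u}) (Γ Δ : Ctx S) : Type (u + 1) :=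
  ∀ v : Γ.Var, Term S Δ (Γ.sortOf v)

/-- Substitution acting on terms. -/
def Term.subst {Γ Δ : Ctx S} (σ : Subst S Γ Δ) : ∀ {A}, Term S Γ A → Term S Δ A
  | _, .var v => σ v
  | _, .func f args => .func f (fun i => (args i).subst σ)

/-- The weakening substitution `Γ → Γ.cons A`. -/
def Subst.wk (A : S.Sorts) {Γ : Ctx S} : Subst S Γ (Ctx.cons A Γ) :=
  fun v => Term.var (Γ := Ctx.cons A Γ) (some v)

/-- Lift a substitution to extended contexts. -/
def Subst.lift {Γ Δ : Ctx S} (σ : Subst S Γ Δ) (A : S.Sorts) :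
    Subst S (Ctx.cons A Γ) (Ctx.cons A Δ) :=
  fun v => match v with
  | none => Term.var (Γ := Ctx.cons A Δ) none
  | some w => (σ w).subst (Subst.wk A)

/-- The substitution `Γ.cons A → Γ` substituting the term `t` for the fresh variable. -/
def Subst.single {Γ : Ctx S} {A : S.Sorts} (t : Term S Γ A) : Subst S (Ctx.cons A Γ) Γ :=
  fun v => match v with
  | none => t
  | some w => Term.var w

/-- Infinitary geometric formulas over a signature: atomic formulas, equality, truth,
falsity, binary conjunction, set-indexed disjunction and existential quantification. -/
inductive Formula (S : GeomSignature.{u}) : Ctx S → Type (u + 1)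
  | rel {Γ : Ctx S} (R : S.Rels)
      (args : ∀ i : Fin (S.domR R).length, Term S Γ ((S.domR R).get i)) : Formula S Γ
  | eq {Γ : Ctx S} {A : S.Sorts} (t₁ t₂ : Term S Γ A) : Formula S Γ
  | true {Γ : Ctx S} : Formula S Γ
  | false {Γ : Ctx S} : Formula S Γ
  | conj {Γ : Ctx S} (φ ψ : Formula S Γ) : Formula S Γ
  | disj {Γ : Ctx S} (I : Type u) (φ : I → Formula S Γ) : Formula S Γ
  | ex {Γ : Ctx S} (A : S.Sorts) (φ : Formula S (Ctx.cons A Γ)) : Formula S Γ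

/-- Substitution acting on formulas. -/
def Formula.subst : ∀ {Γ Δ : Ctx S}, Subst S Γ Δ → Formula S Γ → Formula S Δ
  | _, _, σ, .rel R args => .rel R (fun i => (args i).subst σ)
  | _, _, σ, .eq t₁ t₂ => .eq (t₁.subst σ) (t₂.subst σ)
  | _, _, _, .true => .true
  | _, _, _, .false => .false
  | _, _, σ, .conj φ ψ => Formula.conj (Formula.subst σ φ) (Formula.subst σ ψ)
  | _, _, σ, .disj I φ => .disj I (fun i => Formula.subst σ (φ i))
  | _, _, σ, .ex A φ => .ex A (Formula.subst (σ.lift A) φ)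

/-- A sequent `φ ⊢_Γ ψ` between geometric formulas in a common context. -/
structure GeomSequent (S : GeomSignature.{u}) : Type (u + 1) where
  ctx : Ctx S
  lhs : Formula S ctx
  rhs : Formula S ctx

/-- A theory: a set of sequents (its axioms). -/
abbrev GeomTheory (S : GeomSignature.{u}) : Type (u + 1) := Set (GeomSequent S)

/-- Provability of sequents from a theory `T`, in the standard (intuitionistic) sequent
calculus of geometric logic, where the index types of disjunctions occurring in the
disjunction rules are restricted by the predicate `Adm` (taking `Adm = fun _ => True`
gives geometric logic, `Adm = fun I => Finite I` gives coherent logic). -/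
inductive Provable (Adm : Type u → Prop) (T : GeomTheory S) : GeomSequent S → Prop
  | ax {s : GeomSequent S} : s ∈ T → Provable Adm T s
  | id {Γ : Ctx S} (φ : Formula S Γ) : Provable Adm T ⟨Γ, φ, φ⟩
  | cut {Γ : Ctx S} {φ ψ χ : Formula S Γ} :
      Provable Adm T ⟨Γ, φ, ψ⟩ → Provable Adm T ⟨Γ, ψ, χ⟩ → Provable Adm T ⟨Γ, φ, χ⟩
  | subst {Γ Δ : Ctx S} (σ : Subst S Γ Δ) {φ ψ : Formula S Γ} :
      Provable Adm T ⟨Γ, φ, ψ⟩ → Provable Adm T ⟨Δ, φ.subst σ, ψ.subst σ⟩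
  | trueIntro {Γ : Ctx S} (φ : Formula S Γ) : Provable Adm T ⟨Γ, φ, .true⟩
  | falseElim {Γ : Ctx S} (φ : Formula S Γ) : Provable Adm T ⟨Γ, .false, φ⟩
  | conjIntro {Γ : Ctx S} {φ ψ χ : Formula S Γ} :
      Provable Adm T ⟨Γ, φ, ψ⟩ → Provable Adm T ⟨Γ, φ, χ⟩ → Provable Adm T ⟨Γ, φ, .conj ψ χ⟩
  | conjElimL {Γ : Ctx S} (φ ψ : Formula S Γ) : Provable Adm T ⟨Γ, .conj φ ψ, φ⟩
  | conjElimR {Γ : Ctx S} (φ ψ : Formula S Γ) : Provable Adm T ⟨Γ, .conj φ ψ, ψ⟩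
  | disjIntro {Γ : Ctx S} {I : Type u} (hI : Adm I) (φ : I → Formula S Γ) (i : I) :
      Provable Adm T ⟨Γ, φ i, .disj I φ⟩
  | disjElim {Γ : Ctx S} {I : Type u} (hI : Adm I) {φ : I → Formula S Γ} {ψ : Formula S Γ} :
      (∀ i : I, Provable Adm T ⟨Γ, φ i, ψ⟩) → Provable Adm T ⟨Γ, .disj I φ, ψ⟩
  | distrib {Γ : Ctx S} {I : Type u} (hI : Adm I) (φ : Formula S Γ) (ψ : I → Formula S Γ) :
      Provable Adm T ⟨Γ, .conj φ (.disj I ψ), .disj I (fun i => .conj φ (ψ i))⟩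
  | exAdj₁ {Γ : Ctx S} {A : S.Sorts} {φ : Formula S (Ctx.cons A Γ)} {ψ : Formula S Γ} :
      Provable Adm T ⟨Ctx.cons A Γ, φ, ψ.subst (Subst.wk A)⟩ → Provable Adm T ⟨Γ, .ex A φ, ψ⟩
  | exAdj₂ {Γ : Ctx S} {A : S.Sorts} {φ : Formula S (Ctx.cons A Γ)} {ψ : Formula S Γ} :
      Provable Adm T ⟨Γ, .ex A φ, ψ⟩ → Provable Adm T ⟨Ctx.cons A Γ, φ, ψ.subst (Subst.wk A)⟩
  | frobenius {Γ : Ctx S} {A : S.Sorts} (φ : Formula S Γ) (ψ : Formula S (Ctx.cons A Γ)) :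
      Provable Adm T ⟨Γ, .conj φ (.ex A ψ), .ex A (.conj (φ.subst (Subst.wk A)) ψ)⟩
  | eqRefl {Γ : Ctx S} {A : S.Sorts} (t : Term S Γ A) : Provable Adm T ⟨Γ, .true, .eq t t⟩
  | eqSubst {Γ : Ctx S} {A : S.Sorts} (t u : Term S Γ A) (φ : Formula S (Ctx.cons A Γ)) :
      Provable Adm T ⟨Γ, .conj (.eq t u) (φ.subst (Subst.single t)), φ.subst (Subst.single u)⟩

/-- Provability in geometric logic (arbitrary disjunctions allowed). -/
def GeomProvable (T : GeomTheory S) (s : GeomSequent S) : Prop :=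
  Provable (fun _ => True) T s

/-- Provability in coherent logic (only finite disjunctions allowed). -/
def CohProvable (T : GeomTheory S) (s : GeomSequent S) : Prop :=
  Provable (fun I => Finite I) T s

/-- Coherent formulas: geometric formulas all of whose disjunctions are finite. -/
inductive Formula.IsCoherent : ∀ {Γ : Ctx S}, Formula S Γ → Prop
  | rel {Γ : Ctx S} (R : S.Rels) (args) : (Formula.rel (Γ := Γ) R args).IsCoherent
  | eq {Γ : Ctx S} {A : S.Sorts} (t₁ t₂ : Term S Γ A) : (Formula.eq t₁ t₂).IsCoherent
  | true {Γ : Ctx S} : (Formula.true (Γ := Γ)).IsCoherent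
  | false {Γ : Ctx S} : (Formula.false (Γ := Γ)).IsCoherent
  | conj {Γ : Ctx S} {φ ψ : Formula S Γ} : φ.IsCoherent → ψ.IsCoherent → (φ.conj ψ).IsCoherent
  | disj {Γ : Ctx S} {I : Type u} (hI : Finite I) {φ : I → Formula S Γ} :
      (∀ i, (φ i).IsCoherent) → (Formula.disj I φ).IsCoherent
  | ex {Γ : Ctx S} {A : S.Sorts} {φ : Formula S (Ctx.cons A Γ)} :
      φ.IsCoherent → (φ.ex (A := A)).IsCoherent

/-- A coherent sequent: both sides are coherent formulas. -/
def GeomSequent.IsCoherent (s : GeomSequent S) : Prop :=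
  s.lhs.IsCoherent ∧ s.rhs.IsCoherent

/-- A coherent theory: all axioms are coherent sequents. -/
def GeomTheory.IsCoherent (T : GeomTheory S) : Prop :=
  ∀ s ∈ T, GeomSequent.IsCoherent s

/-!
Call `c` an approximant of a geometric formula `φ` if `c` arises from `φ` by replacing every
disjunction with a finite subdisjunction (recursively). Approximants are coherent, they entail
`φ`, and `φ` entails the disjunction of all of them.

If `T` is coherent, induction on derivations shows that for every provable `φ ⊢ ψ`, every
approximant of `φ` entails a finite disjunction of approximants of `ψ`. A coherent `φ` is a
finite disjunction of its approximants, and an approximant of `⋁ᵢ ψᵢ` mentions only finitely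
many `ψᵢ`; this is compactness.

Conversely, if `T` is compact, it is equivalent to the theory of its provable coherent sequents:
for an axiom `φ ⊢ ψ`, each approximant `c` of `φ` entails the disjunction of all approximants
of `ψ`, hence by compactness a finite subdisjunction of them, and `c ⊢ ⋁_{finite} dⱼ` is a
provable coherent sequent.
-/

notation:50 φ:51 " ⊢[" T "] " ψ:51 => GeomProvable T (GeomSequent.mk _ φ ψ)

abbrev Formula.finsetDisj {Γ : Ctx S} {I : Type u} (F : Finset I) (f : I → Formula S Γ) :
    Formula S Γ :=
  .disj {i // i ∈ F} fun i => f i.1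

namespace GeomProvable

variable {T : GeomTheory S} {Γ : Ctx S}

theorem trans {φ ψ χ : Formula S Γ} (h₁ : φ ⊢[T] ψ) (h₂ : ψ ⊢[T] χ) : φ ⊢[T] χ :=
  Provable.cut h₁ h₂

theorem disj_intro {I : Type u} (f : I → Formula S Γ) (i : I) : f i ⊢[T] .disj I f :=
  Provable.disjIntro trivial f i

theorem disj_elim {I : Type u} {f : I → Formula S Γ} {χ : Formula S Γ}
    (h : ∀ i, f i ⊢[T] χ) : .disj I f ⊢[T] χ :=
  Provable.disjElim trivial h

theorem conj_mono {φ ψ φ' ψ' : Formula S Γ} (h₁ : φ ⊢[T] φ') (h₂ : ψ ⊢[T] ψ') :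
    .conj φ ψ ⊢[T] .conj φ' ψ' :=
  Provable.conjIntro ((Provable.conjElimL φ ψ).cut h₁) ((Provable.conjElimR φ ψ).cut h₂)

theorem conj_comm (φ ψ : Formula S Γ) : .conj φ ψ ⊢[T] .conj ψ φ :=
  Provable.conjIntro (Provable.conjElimR φ ψ) (Provable.conjElimL φ ψ)

theorem conj_disj (φ : Formula S Γ) {I : Type u} (f : I → Formula S Γ) :
    .conj φ (.disj I f) ⊢[T] .disj I fun i => .conj φ (f i) :=
  Provable.distrib trivial φ f

theorem disj_conj {I : Type u} (f : I → Formula S Γ) (ψ : Formula S Γ) :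
    .conj (.disj I f) ψ ⊢[T] .disj I fun i => .conj (f i) ψ :=
  (conj_comm _ _).trans <| (conj_disj ψ f).trans <|
    disj_elim fun i => (conj_comm _ _).trans (disj_intro (fun i => .conj (f i) ψ) i)

theorem subst_wk_ex (A : S.Sorts) (φ : Formula S (Ctx.cons A Γ)) :
    φ ⊢[T] (Formula.ex A φ).subst (Subst.wk A) :=
  Provable.exAdj₂ (Provable.id _)

theorem ex_mono {A : S.Sorts} {φ ψ : Formula S (Ctx.cons A Γ)} (h : φ ⊢[T] ψ) :
    .ex A φ ⊢[T] .ex A ψ :=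
  Provable.exAdj₁ (h.trans (subst_wk_ex A ψ))

end GeomProvable

open GeomProvable

inductive Approx : ∀ {Γ : Ctx S}, Formula S Γ → Formula S Γ → Prop
  | rel {Γ : Ctx S} (R : S.Rels) (args) : Approx (Formula.rel (Γ := Γ) R args) (.rel R args)
  | eq {Γ : Ctx S} {A : S.Sorts} (t₁ t₂ : Term S Γ A) : Approx (.eq t₁ t₂) (.eq t₁ t₂)
  | true {Γ : Ctx S} : Approx (Formula.true (Γ := Γ)) .true
  | false {Γ : Ctx S} : Approx (Formula.false (Γ := Γ)) .false
  | conj {Γ : Ctx S} {φ ψ c d : Formula S Γ} :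
      Approx φ c → Approx ψ d → Approx (.conj φ ψ) (.conj c d)
  | disj {Γ : Ctx S} {I J : Type u} [Finite J] {f : I → Formula S Γ} (g : J → I)
      {c : J → Formula S Γ} : (∀ j, Approx (f (g j)) (c j)) → Approx (.disj I f) (.disj J c)
  | ex {Γ : Ctx S} {A : S.Sorts} {φ c : Formula S (Ctx.cons A Γ)} :
      Approx φ c → Approx (.ex A φ) (.ex A c)

namespace Approx

variable {T : GeomTheory S} {Γ : Ctx S}

theorem isCoherent {φ c : Formula S Γ} (h : Approx φ c) : c.IsCoherent := by
  induction h with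
  | rel R args => exact .rel R args
  | eq t₁ t₂ => exact .eq t₁ t₂
  | true => exact .true
  | false => exact .false
  | conj _ _ ih₁ ih₂ => exact .conj ih₁ ih₂
  | disj _ _ ih => exact .disj inferInstance ih
  | ex _ ih => exact .ex ih

theorem entails {φ c : Formula S Γ} (h : Approx φ c) : c ⊢[T] φ := by
  induction h with
  | rel R args => exact Provable.id _
  | eq t₁ t₂ => exact Provable.id _
  | true => exact Provable.id _
  | false => exact Provable.id _
  | conj _ _ ih₁ ih₂ => exact conj_mono ih₁ ih₂
  | disj g _ ih => exact disj_elim fun j => (ih j).trans (disj_intro _ (g j))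
  | ex _ ih => exact ex_mono ih

theorem subst {Δ : Ctx S} {φ c : Formula S Γ} (h : Approx φ c) (σ : Subst S Γ Δ) :
    Approx (φ.subst σ) (c.subst σ) := by
  induction h generalizing Δ with
  | rel R args => exact .rel R _
  | eq t₁ t₂ => exact .eq _ _
  | true => exact .true
  | false => exact .false
  | conj _ _ ih₁ ih₂ => exact .conj (ih₁ σ) (ih₂ σ)
  | disj g _ ih => exact .disj g fun j => ih j σ
  | ex _ ih => exact .ex (ih _)

theorem exists_eq_subst {Δ : Ctx S} {σ : Subst S Γ Δ} {φ : Formula S Γ} {c : Formula S Δ}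
    (h : Approx (φ.subst σ) c) : ∃ c₀, Approx φ c₀ ∧ c = c₀.subst σ := by
  induction φ generalizing Δ with
  | rel R args => cases h; exact ⟨_, .rel R args, rfl⟩
  | eq t₁ t₂ => cases h; exact ⟨_, .eq t₁ t₂, rfl⟩
  | true => cases h; exact ⟨_, .true, rfl⟩
  | false => cases h; exact ⟨_, .false, rfl⟩
  | conj φ ψ ihφ ihψ =>
    cases h with
    | conj hc hd =>
      obtain ⟨c₀, hc₀, rfl⟩ := ihφ hc
      obtain ⟨d₀, hd₀, rfl⟩ := ihψ hd
      exact ⟨_, hc₀.conj hd₀, rfl⟩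
  | disj I f ih =>
    cases h with
    | disj g hc =>
      choose c₀ hc₀ hc_eq using fun j => ih (g j) (hc j)
      exact ⟨_, .disj g hc₀, by simp only [Formula.subst, funext hc_eq]⟩
  | ex A φ ih =>
    cases h with
    | ex hc =>
      obtain ⟨c₀, hc₀, rfl⟩ := ih hc
      exact ⟨_, hc₀.ex, rfl⟩

end Approx

section Cover

variable {T : GeomTheory S} {Γ : Ctx S}

def CoveredByApprox (T : GeomTheory S) {Γ : Ctx S} (c ψ : Formula S Γ) : Prop :=
  ∃ (J : Type u) (_ : Finite J) (d : J → Formula S Γ),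
    (∀ j, Approx ψ (d j)) ∧ c ⊢[T] .disj J d

namespace CoveredByApprox

theorem of_approx {c d ψ : Formula S Γ} (hd : Approx ψ d) (h : c ⊢[T] d) :
    CoveredByApprox T c ψ :=
  ⟨PUnit, inferInstance, fun _ => d, fun _ => hd,
    h.trans (disj_intro (fun _ : PUnit => d) ⟨⟩)⟩

theorem mono_left {c c' ψ : Formula S Γ} (h : c' ⊢[T] c) (hc : CoveredByApprox T c ψ) :
    CoveredByApprox T c' ψ :=
  let ⟨J, hJ, d, hd, hc⟩ := hc
  ⟨J, hJ, d, hd, h.trans hc⟩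

theorem of_entails_disj {J : Type u} [Finite J] {c ψ : Formula S Γ} {d : J → Formula S Γ}
    (hc : c ⊢[T] .disj J d) (hd : ∀ j, CoveredByApprox T (d j) ψ) :
    CoveredByApprox T c ψ := by
  choose K _ e he hde using hd
  refine ⟨(j : J) × K j, inferInstance, fun p => e p.1 p.2, fun p => he p.1 p.2, ?_⟩
  exact hc.trans <| disj_elim fun j => (hde j).trans <|
    disj_elim fun k => disj_intro (fun p : (j : J) × K j => e p.1 p.2) ⟨j, k⟩

theorem trans {c ψ χ : Formula S Γ} (hc : CoveredByApprox T c ψ)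
    (hψ : ∀ d, Approx ψ d → CoveredByApprox T d χ) : CoveredByApprox T c χ :=
  let ⟨_, _, _, hd, hc⟩ := hc
  of_entails_disj hc fun j => hψ _ (hd j)

theorem false_left (ψ : Formula S Γ) : CoveredByApprox T .false ψ :=
  of_entails_disj (d := PEmpty.elim) (Provable.falseElim _) PEmpty.rec

theorem conj {c φ ψ : Formula S Γ} (hφ : CoveredByApprox T c φ) (hψ : CoveredByApprox T c ψ) :
    CoveredByApprox T c (.conj φ ψ) := by
  obtain ⟨J₁, _, d₁, hd₁, hc₁⟩ := hφ
  obtain ⟨J₂, _, d₂, hd₂, hc₂⟩ := hψ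
  refine of_entails_disj ((Provable.conjIntro hc₁ hc₂).cut (disj_conj d₁ _)) fun j₁ => ?_
  exact of_entails_disj (conj_disj _ d₂) fun j₂ =>
    of_approx ((hd₁ j₁).conj (hd₂ j₂)) (Provable.id _)

theorem disj_right {I : Type u} {c : Formula S Γ} {f : I → Formula S Γ} (i : I)
    (h : CoveredByApprox T c (f i)) : CoveredByApprox T c (.disj I f) :=
  h.trans fun d hd => of_approx (.disj (J := PUnit) (fun _ => i) fun _ => hd)
    (disj_intro (fun _ : PUnit => d) ⟨⟩)

theorem subst {Δ : Ctx S} {c ψ : Formula S Γ} (h : CoveredByApprox T c ψ) (σ : Subst S Γ Δ) :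
    CoveredByApprox T (c.subst σ) (ψ.subst σ) :=
  let ⟨J, hJ, d, hd, hc⟩ := h
  ⟨J, hJ, fun j => (d j).subst σ, fun j => (hd j).subst σ, Provable.subst σ hc⟩

theorem ex_left {A : S.Sorts} {c : Formula S (Ctx.cons A Γ)} {ψ : Formula S Γ}
    (h : CoveredByApprox T c (ψ.subst (Subst.wk A))) : CoveredByApprox T (.ex A c) ψ := by
  obtain ⟨J, hJ, d, hd, hc⟩ := h
  choose d₀ hd₀ hd_eq using fun j => (hd j).exists_eq_subst
  obtain rfl : d = fun j => (d₀ j).subst (Subst.wk A) := funext hd_eq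
  exact ⟨J, hJ, d₀, hd₀, Provable.exAdj₁ hc⟩

end CoveredByApprox

theorem Formula.IsCoherent.coveredByApprox {φ : Formula S Γ} (hφ : φ.IsCoherent) :
    CoveredByApprox T φ φ := by
  induction hφ with
  | rel R args => exact .of_approx (.rel R args) (Provable.id _)
  | eq t₁ t₂ => exact .of_approx (.eq t₁ t₂) (Provable.id _)
  | true => exact .of_approx .true (Provable.id _)
  | false => exact .of_approx .false (Provable.id _)
  | conj _ _ ih₁ ih₂ =>
    exact (ih₁.mono_left (Provable.conjElimL _ _)).conj (ih₂.mono_left (Provable.conjElimR _ _))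
  | disj hI _ ih => exact .of_entails_disj (Provable.id _) fun i => (ih i).disj_right i
  | @ex _ A _ _ ih =>
    exact .ex_left <| ih.trans fun d hd => .of_approx (hd.ex.subst _) (subst_wk_ex A d)

theorem coveredByApprox_of_provable (hT : T.IsCoherent) {s : GeomSequent S}
    (h : GeomProvable T s) {c : Formula S s.ctx} (hc : Approx s.lhs c) :
    CoveredByApprox T c s.rhs := by
  induction h with
  | ax hs => exact (hT _ hs).2.coveredByApprox.mono_left (hc.entails.trans (Provable.ax hs))
  | id φ => exact .of_approx hc (Provable.id _)
  | cut _ _ ih₁ ih₂ => exact (ih₁ hc).trans fun d hd => ih₂ hd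
  | subst σ _ ih =>
    obtain ⟨c₀, hc₀, rfl⟩ := hc.exists_eq_subst
    exact (ih hc₀).subst σ
  | trueIntro φ => exact .of_approx .true (Provable.trueIntro _)
  | falseElim φ => cases hc; exact .false_left φ
  | conjIntro _ _ ih₁ ih₂ => exact (ih₁ hc).conj (ih₂ hc)
  | conjElimL φ ψ => cases hc with | conj h₁ _ => exact .of_approx h₁ (Provable.conjElimL _ _)
  | conjElimR φ ψ => cases hc with | conj _ h₂ => exact .of_approx h₂ (Provable.conjElimR _ _)
  | disjIntro _ f i => exact (CoveredByApprox.of_approx hc (Provable.id _)).disj_right i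
  | disjElim _ _ ih =>
    cases hc with
    | disj g hc => exact .of_entails_disj (Provable.id _) fun j => ih _ (hc j)
  | distrib _ φ ψ =>
    cases hc with
    | conj h₁ h₂ =>
      cases h₂ with
      | disj g hc =>
        exact .of_entails_disj (conj_disj _ _) fun j =>
          (CoveredByApprox.of_approx (h₁.conj (hc j)) (Provable.id _)).disj_right (g j)
  | exAdj₁ _ ih => cases hc with | ex hc => exact (ih hc).ex_left
  | exAdj₂ _ ih => exact ((ih hc.ex).subst _).mono_left (subst_wk_ex _ _)
  | frobenius φ ψ =>
    cases hc with
    | conj h₁ h₂ =>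
      cases h₂ with
      | ex h₃ => exact .of_approx ((h₁.subst _).conj h₃).ex (Provable.frobenius _ _)
  | eqRefl t => cases hc; exact .of_approx (.eq t t) (Provable.eqRefl t)
  | eqSubst t u φ =>
    cases hc with
    | conj h₁ h₂ =>
      cases h₁
      obtain ⟨c₀, hc₀, rfl⟩ := h₂.exists_eq_subst
      exact .of_approx (hc₀.subst _) (Provable.eqSubst t u c₀)

end Cover

def GeomTheory.IsCompact (T : GeomTheory S) : Prop :=
  ∀ (Γ : Ctx S) (φ : Formula S Γ), φ.IsCoherent →
    ∀ (I : Type u) (ψ : I → Formula S Γ), φ ⊢[T] .disj I ψ →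
      ∃ I' : Finset I, φ ⊢[T] Formula.finsetDisj I' ψ

section Compactness

variable {T : GeomTheory S} {Γ : Ctx S}

theorem exists_finset_of_entails_disj {I J : Type u} [Finite J] {c : Formula S Γ}
    {d : J → Formula S Γ} {f : I → Formula S Γ} (hc : c ⊢[T] .disj J d)
    (hd : ∀ j, ∃ F : Finset I, d j ⊢[T] Formula.finsetDisj F f) :
    ∃ F : Finset I, c ⊢[T] Formula.finsetDisj F f := by
  classical
  choose F hF using hd
  cases nonempty_fintype J
  refine ⟨Finset.univ.biUnion F,
    hc.trans <| disj_elim fun j => (hF j).trans <| disj_elim fun i => ?_⟩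
  exact disj_intro (fun i : {i // i ∈ Finset.univ.biUnion F} => f i.1)
    ⟨i.1, Finset.mem_biUnion.2 ⟨j, Finset.mem_univ j, i.2⟩⟩

theorem Approx.exists_finset_of_disj {I : Type u} {f : I → Formula S Γ} {c : Formula S Γ}
    (h : Approx (.disj I f) c) : ∃ F : Finset I, c ⊢[T] Formula.finsetDisj F f := by
  cases h with
  | disj g hc =>
    refine ⟨(Set.finite_range g).toFinset, disj_elim fun j => (hc j).entails.trans ?_⟩
    exact disj_intro (fun i : {i // i ∈ (Set.finite_range g).toFinset} => f i.1) ⟨g j, by simp⟩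

theorem GeomTheory.IsCoherent.isCompact (hT : T.IsCoherent) : T.IsCompact := by
  intro Γ φ hφ I f h
  obtain ⟨J, _, d, hd, hφd⟩ :=
    hφ.coveredByApprox.trans fun c hc => coveredByApprox_of_provable hT h hc
  exact exists_finset_of_entails_disj hφd fun j => (hd j).exists_finset_of_disj

theorem GeomTheory.IsCompact.of_geomProvable_iff {T' : GeomTheory S} (hT' : T'.IsCompact)
    (hTT' : ∀ s, GeomProvable T s ↔ GeomProvable T' s) : T.IsCompact := by
  intro Γ φ hφ I f h
  obtain ⟨F, hF⟩ := hT' Γ φ hφ I f ((hTT' _).1 h)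
  exact ⟨F, (hTT' _).2 hF⟩

end Compactness

def Formula.ApproxIndex : ∀ {Γ : Ctx S}, Formula S Γ → Type u
  | _, .rel _ _ | _, .eq _ _ | _, .true | _, .false => PUnit
  | _, .conj φ ψ => φ.ApproxIndex × ψ.ApproxIndex
  | _, .disj I f => (i : I) × (f i).ApproxIndex
  | _, .ex _ φ => φ.ApproxIndex

/-- Disjunctions are approximated by single disjuncts; that already suffices for
`Formula.entails_disj_approximant`. -/
def Formula.approximant : ∀ {Γ : Ctx S} (φ : Formula S Γ), φ.ApproxIndex → Formula S Γ
  | _, .rel R args, _ => .rel R args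
  | _, .eq t₁ t₂, _ => .eq t₁ t₂
  | _, .true, _ => .true
  | _, .false, _ => .false
  | _, .conj φ ψ, c => .conj (φ.approximant c.1) (ψ.approximant c.2)
  | _, .disj _ f, c => .disj PUnit fun _ => (f c.1).approximant c.2
  | _, .ex A φ, c => .ex A (φ.approximant c)

section CanonicalApproximants

variable {T : GeomTheory S} {Γ : Ctx S}

theorem Formula.approx_approximant (φ : Formula S Γ) (c : φ.ApproxIndex) :
    Approx φ (φ.approximant c) := by
  induction φ with
  | rel R args => exact .rel R args
  | eq t₁ t₂ => exact .eq t₁ t₂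
  | true => exact .true
  | false => exact .false
  | conj φ ψ ihφ ihψ => exact .conj (ihφ c.1) (ihψ c.2)
  | disj I f ih => exact .disj (J := PUnit) (fun _ => c.1) fun _ => ih c.1 c.2
  | ex A φ ih => exact .ex (ih c)

theorem Formula.entails_disj_approximant (φ : Formula S Γ) :
    φ ⊢[T] .disj φ.ApproxIndex φ.approximant := by
  induction φ with
  | rel R args => exact disj_intro (Formula.rel R args).approximant ⟨⟩
  | eq t₁ t₂ => exact disj_intro (Formula.eq t₁ t₂).approximant ⟨⟩
  | @true Δ => exact disj_intro (Formula.true (Γ := Δ)).approximant ⟨⟩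
  | @false Δ => exact disj_intro (Formula.false (Γ := Δ)).approximant ⟨⟩
  | conj φ ψ ihφ ihψ =>
    refine (conj_mono ihφ ihψ).trans <| (disj_conj _ _).trans <| disj_elim fun a => ?_
    exact (conj_disj _ _).trans <| disj_elim fun b => disj_intro (φ.conj ψ).approximant (a, b)
  | disj I f ih =>
    refine disj_elim fun i => (ih i).trans <| disj_elim fun c => ?_
    exact (disj_intro (fun _ : PUnit => (f i).approximant c) ⟨⟩).trans
      (disj_intro (Formula.disj I f).approximant ⟨i, c⟩)
  | ex A φ ih =>
    refine Provable.exAdj₁ (ih.trans <| disj_elim fun c => (subst_wk_ex A _).trans ?_)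
    exact Provable.subst (Subst.wk A) (disj_intro (Formula.ex A φ).approximant c)

end CanonicalApproximants

theorem Provable.of_provable_axioms {Adm : Type u → Prop} {T₁ T₂ : GeomTheory S}
    (hax : ∀ s ∈ T₁, Provable Adm T₂ s) {s : GeomSequent S} (h : Provable Adm T₁ s) :
    Provable Adm T₂ s := by
  induction h with
  | ax hs => exact hax _ hs
  | id φ => exact .id φ
  | cut _ _ ih₁ ih₂ => exact .cut ih₁ ih₂
  | subst σ _ ih => exact .subst σ ih
  | trueIntro φ => exact .trueIntro φ
  | falseElim φ => exact .falseElim φ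
  | conjIntro _ _ ih₁ ih₂ => exact .conjIntro ih₁ ih₂
  | conjElimL φ ψ => exact .conjElimL φ ψ
  | conjElimR φ ψ => exact .conjElimR φ ψ
  | disjIntro hI f i => exact .disjIntro hI f i
  | disjElim hI _ ih => exact .disjElim hI ih
  | distrib hI φ ψ => exact .distrib hI φ ψ
  | exAdj₁ _ ih => exact .exAdj₁ ih
  | exAdj₂ _ ih => exact .exAdj₂ ih
  | frobenius φ ψ => exact .frobenius φ ψ
  | eqRefl t => exact .eqRefl t
  | eqSubst t u φ => exact .eqSubst t u φ

def GeomTheory.coherentConsequences (T : GeomTheory S) : GeomTheory S :=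
  {s | s.IsCoherent ∧ GeomProvable T s}

theorem GeomTheory.IsCompact.entails_coherentConsequences {T : GeomTheory S} (hT : T.IsCompact)
    {Γ : Ctx S} {φ ψ : Formula S Γ} (h : φ ⊢[T] ψ) : φ ⊢[T.coherentConsequences] ψ := by
  refine φ.entails_disj_approximant.trans <| disj_elim fun c => ?_
  have hc := φ.approx_approximant c
  obtain ⟨F, hF⟩ := hT Γ _ hc.isCoherent _ ψ.approximant
    (hc.entails.trans (h.trans ψ.entails_disj_approximant))
  have hmem :
      ⟨Γ, φ.approximant c, Formula.finsetDisj F ψ.approximant⟩ ∈ T.coherentConsequences :=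
    ⟨⟨hc.isCoherent, .disj inferInstance fun d => (ψ.approx_approximant d.1).isCoherent⟩, hF⟩
  exact (Provable.ax hmem).cut (disj_elim fun d => (ψ.approx_approximant d.1).entails)

theorem GeomTheory.IsCompact.geomProvable_iff {T : GeomTheory S} (hT : T.IsCompact)
    (s : GeomSequent S) : GeomProvable T s ↔ GeomProvable T.coherentConsequences s :=
  ⟨Provable.of_provable_axioms fun _ hs => hT.entails_coherentConsequences (Provable.ax hs),
    Provable.of_provable_axioms fun _ hs => hs.2⟩

/-- A geometric theory `T` is syntactically equivalent to a coherent theory iff for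
every coherent formula `φ` and every family `ψᵢ` of geometric formulas in the same
context, the provability of `φ ⊢ ⋁ᵢ ψᵢ` in `T` implies that of `φ ⊢ ⋁_{i ∈ I'} ψᵢ`
for some finite subset `I'`. -/
theorem coherent_iff_compactness {S : GeomSignature.{u}} (T : GeomTheory S) :
    (∃ T' : GeomTheory S, T'.IsCoherent ∧
      ∀ σ : GeomSequent S, GeomProvable T σ ↔ GeomProvable T' σ) ↔
    (∀ (Γ : Ctx S) (φ : Formula S Γ), φ.IsCoherent →
      ∀ (I : Type u) (ψ : I → Formula S Γ),
        GeomProvable T ⟨Γ, φ, .disj I ψ⟩ →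
        ∃ I' : Finset I,
          GeomProvable T ⟨Γ, φ, .disj {i : I // i ∈ I'} (fun i => ψ i.1)⟩) := by
  change _ ↔ T.IsCompact
  constructor
  · rintro ⟨T', hT', hTT'⟩
    exact hT'.isCompact.of_geomProvable_iff hTT'
  · intro hT
    exact ⟨T.coherentConsequences, fun _ hs => hs.1, hT.geomProvable_iff⟩
end

section
/- Let T be a coherent theory over a signature Σ. A coherent sequent over Σ is provable in T using the proof system of coherent logic if and only if it is provable in T using the proof system of geometric logic. -/
universe u

variable {S : GeomSignature.{u}}

/-!
Every geometric formula is equivalent to the disjunction of its *disjuncts*, the disjunction-free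
formulas obtained by distributing `∧` and `∃` over `⋁`. For a coherent formula, coherent logic
already proves it equivalent to the finite disjunction of these. By induction on geometric
derivations, whenever `φ ⊢ ψ` is geometrically derivable from a coherent theory, each disjunct of
`φ` coherently entails a finite disjunction of disjuncts of `ψ`; the axioms pose no problem since
their two sides are coherent. For a coherent sequent this reassembles into a coherent derivation.
-/

section Conservativity

variable {S : GeomSignature.{u}} {T : GeomTheory S}

theorem Provable.mono {Adm Adm' : Type u → Prop} (hA : ∀ I, Adm I → Adm' I)
    {s : GeomSequent S} (h : Provable Adm T s) : Provable Adm' T s := by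
  induction h with
  | ax h => exact .ax h
  | id φ => exact .id φ
  | cut _ _ ih₁ ih₂ => exact .cut ih₁ ih₂
  | subst σ _ ih => exact .subst σ ih
  | trueIntro φ => exact .trueIntro φ
  | falseElim φ => exact .falseElim φ
  | conjIntro _ _ ih₁ ih₂ => exact .conjIntro ih₁ ih₂
  | conjElimL φ ψ => exact .conjElimL φ ψ
  | conjElimR φ ψ => exact .conjElimR φ ψ
  | disjIntro hI φ i => exact .disjIntro (hA _ hI) φ i
  | disjElim hI _ ih => exact .disjElim (hA _ hI) ih
  | distrib hI φ ψ => exact .distrib (hA _ hI) φ ψ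
  | exAdj₁ _ ih => exact .exAdj₁ ih
  | exAdj₂ _ ih => exact .exAdj₂ ih
  | frobenius φ ψ => exact .frobenius φ ψ
  | eqRefl t => exact .eqRefl t
  | eqSubst t u φ => exact .eqSubst t u φ

theorem CohProvable.geomProvable {s : GeomSequent S} (h : CohProvable T s) : GeomProvable T s :=
  Provable.mono (fun _ _ => trivial) h

theorem Provable.conj_comm {Adm : Type u → Prop} {Γ : Ctx S} (φ ψ : Formula S Γ) :
    Provable Adm T ⟨Γ, .conj φ ψ, .conj ψ φ⟩ :=
  .conjIntro (.conjElimR φ ψ) (.conjElimL φ ψ)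

theorem CohProvable.conj_disj_disj {Γ : Ctx S} {I J : Type u} [Finite I] [Finite J]
    (φ : I → Formula S Γ) (ψ : J → Formula S Γ) :
    CohProvable T ⟨Γ, .conj (.disj I φ) (.disj J ψ),
      .disj (I × J) (fun p => .conj (φ p.1) (ψ p.2))⟩ := by
  have hI : Finite I := inferInstance
  have hJ : Finite J := inferInstance
  refine .cut (.distrib hJ _ ψ) (.disjElim hJ fun j => ?_)
  refine .cut (.conj_comm _ _) (.cut (.distrib hI _ φ) (.disjElim hI fun i => ?_))
  exact .cut (.conj_comm _ _)
    (.disjIntro (inferInstance : Finite (I × J)) (fun p => .conj (φ p.1) (ψ p.2)) (i, j))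

def CohCoveredBy (T : GeomTheory S) {Γ : Ctx S} (φ : Formula S Γ) (X : Set (Formula S Γ)) :
    Prop :=
  ∃ (I : Type u) (_ : Finite I) (ψ : I → Formula S Γ),
    (∀ i, ψ i ∈ X) ∧ CohProvable T ⟨Γ, φ, .disj I ψ⟩

namespace CohCoveredBy

variable {Γ : Ctx S} {φ ψ : Formula S Γ} {X Y : Set (Formula S Γ)}

theorem of_provable (h : CohProvable T ⟨Γ, φ, ψ⟩) (hψ : ψ ∈ X) : CohCoveredBy T φ X :=
  ⟨PUnit, Finite.of_fintype _, fun _ => ψ, fun _ => hψ,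
    .cut h (.disjIntro (Finite.of_fintype _) (fun _ : PUnit => ψ) PUnit.unit)⟩

theorem of_mem (h : φ ∈ X) : CohCoveredBy T φ X :=
  of_provable (.id φ) h

theorem of_disj {I : Type u} [Finite I] (φ : I → Formula S Γ) :
    CohCoveredBy T (.disj I φ) (Set.range φ) :=
  ⟨I, ‹_›, φ, Set.mem_range_self, .id _⟩

theorem false : CohCoveredBy T (Formula.false (Γ := Γ)) X :=
  ⟨PEmpty, Finite.of_fintype _, PEmpty.elim, PEmpty.rec, .falseElim _⟩

theorem cut (h : CohProvable T ⟨Γ, φ, ψ⟩) (hψ : CohCoveredBy T ψ X) : CohCoveredBy T φ X :=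
  let ⟨I, hI, χ, hχ, p⟩ := hψ
  ⟨I, hI, χ, hχ, .cut h p⟩

theorem mono (h : CohCoveredBy T φ X) (hXY : X ⊆ Y) : CohCoveredBy T φ Y :=
  let ⟨I, hI, χ, hχ, p⟩ := h
  ⟨I, hI, χ, fun i => hXY (hχ i), p⟩

theorem trans (hφ : CohCoveredBy T φ X) (hX : ∀ ψ ∈ X, CohCoveredBy T ψ Y) :
    CohCoveredBy T φ Y := by
  obtain ⟨I, hI, χ, hχ, p⟩ := hφ
  choose J hJ θ hθ q using fun i => hX (χ i) (hχ i)
  have hIJ : Finite (Σ i, J i) := inferInstance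
  refine ⟨Σ i, J i, hIJ, fun k => θ k.1 k.2, fun k => hθ k.1 k.2, .cut p ?_⟩
  exact .disjElim hI fun i => .cut (q i) <|
    .disjElim (hJ i) fun j => .disjIntro hIJ (fun k => θ k.1 k.2) ⟨i, j⟩

theorem cohProvable (hφ : CohCoveredBy T φ X) (hX : ∀ χ ∈ X, CohProvable T ⟨Γ, χ, ψ⟩) :
    CohProvable T ⟨Γ, φ, ψ⟩ :=
  let ⟨_, hI, _, hχ, p⟩ := hφ
  .cut p (.disjElim hI fun i => hX _ (hχ i))

theorem conj (hX : CohCoveredBy T φ X) (hY : CohCoveredBy T φ Y) :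
    CohCoveredBy T φ (Set.image2 Formula.conj X Y) := by
  obtain ⟨I, hI, χ, hχ, p⟩ := hX
  obtain ⟨J, hJ, χ', hχ', p'⟩ := hY
  exact ⟨I × J, inferInstance, fun k => .conj (χ k.1) (χ' k.2),
    fun k => Set.mem_image2_of_mem (hχ k.1) (hχ' k.2),
    .cut (.conjIntro p p') (CohProvable.conj_disj_disj χ χ')⟩

theorem disj {I : Type u} [Finite I] {φ : I → Formula S Γ} (h : ∀ i, CohCoveredBy T (φ i) X) :
    CohCoveredBy T (.disj I φ) X :=
  (of_disj φ).trans <| by rintro _ ⟨i, rfl⟩; exact h i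

theorem subst {Δ : Ctx S} (σ : Subst S Γ Δ) (h : CohCoveredBy T φ X) :
    CohCoveredBy T (φ.subst σ) (Formula.subst σ '' X) :=
  let ⟨I, hI, χ, hχ, p⟩ := h
  ⟨I, hI, fun i => (χ i).subst σ, fun i => Set.mem_image_of_mem _ (hχ i), .subst σ p⟩

theorem ex_iff {A : S.Sorts} {φ : Formula S (Ctx.cons A Γ)} :
    CohCoveredBy T (.ex A φ) X ↔ CohCoveredBy T φ (Formula.subst (Subst.wk A) '' X) := by
  constructor
  · rintro ⟨I, hI, χ, hχ, p⟩
    exact ⟨I, hI, fun i => (χ i).subst (Subst.wk A), fun i => Set.mem_image_of_mem _ (hχ i),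
      .exAdj₂ p⟩
  · rintro ⟨I, hI, χ, hχ, p⟩
    choose χ₀ hχ₀ hχχ₀ using hχ
    obtain rfl : χ = fun i => (χ₀ i).subst (Subst.wk A) := funext fun i => (hχχ₀ i).symm
    exact ⟨I, hI, χ₀, hχ₀, .exAdj₁ p⟩

end CohCoveredBy

def Formula.disjuncts : ∀ {Γ : Ctx S}, Formula S Γ → Set (Formula S Γ)
  | _, .rel R args => {.rel R args}
  | _, .eq t u => {.eq t u}
  | _, .true => {.true}
  | _, .false => {.false}
  | _, .conj φ ψ => Set.image2 .conj φ.disjuncts ψ.disjuncts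
  | _, .disj _ φ => ⋃ i, (φ i).disjuncts
  | _, .ex A φ => .ex A '' φ.disjuncts

namespace Formula

theorem disjuncts_subst {Γ : Ctx S} (φ : Formula S Γ) :
    ∀ {Δ : Ctx S} (σ : Subst S Γ Δ), (φ.subst σ).disjuncts = Formula.subst σ '' φ.disjuncts := by
  induction φ with
  | rel | eq | true | false => intro Δ σ; simp [disjuncts, Formula.subst]
  | conj φ ψ ihφ ihψ =>
    intro Δ σ
    rw [Formula.subst, disjuncts, disjuncts, ihφ, ihψ]
    exact (Set.image_image2_distrib (g := Formula.subst σ) (f' := conj) fun _ _ => rfl).symm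
  | disj I φ ih =>
    intro Δ σ
    simp only [Formula.subst, disjuncts, ih, Set.image_iUnion]
  | ex A φ ih =>
    intro Δ σ
    rw [Formula.subst, disjuncts, disjuncts, ih, Set.image_image, Set.image_image]
    rfl

theorem subst_mem_disjuncts_subst {Γ Δ : Ctx S} (σ : Subst S Γ Δ) {φ χ : Formula S Γ}
    (h : χ ∈ φ.disjuncts) : χ.subst σ ∈ (φ.subst σ).disjuncts :=
  (disjuncts_subst φ σ).symm ▸ Set.mem_image_of_mem _ h

end Formula

namespace Formula.IsCoherent

variable {Γ : Ctx S} {φ : Formula S Γ}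

theorem cohProvable_of_mem_disjuncts (hφ : φ.IsCoherent) {χ : Formula S Γ}
    (hχ : χ ∈ φ.disjuncts) : CohProvable T ⟨Γ, χ, φ⟩ := by
  induction hφ with
  | rel | eq | true | false => rw [hχ]; exact .id _
  | conj _ _ ihφ ihψ =>
    obtain ⟨φ', hφ', ψ', hψ', rfl⟩ := hχ
    exact .conjIntro (.cut (.conjElimL φ' ψ') (ihφ hφ')) (.cut (.conjElimR φ' ψ') (ihψ hψ'))
  | disj hI _ ih =>
    obtain ⟨i, hi⟩ := Set.mem_iUnion.mp hχ
    exact .cut (ih i hi) (.disjIntro hI _ i)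
  | ex _ ih =>
    obtain ⟨φ', hφ', rfl⟩ := hχ
    exact .exAdj₁ (.cut (ih hφ') (.exAdj₂ (.id _)))

theorem cohCoveredBy_disjuncts (hφ : φ.IsCoherent) : CohCoveredBy T φ φ.disjuncts := by
  induction hφ with
  | rel | eq | true | false => exact .of_mem rfl
  | conj _ _ ihφ ihψ =>
    exact .conj (.cut (.conjElimL _ _) ihφ) (.cut (.conjElimR _ _) ihψ)
  | @disj _ _ hI φ _ ih =>
    have := hI
    exact .disj fun i => (ih i).mono (Set.subset_iUnion (fun i => (φ i).disjuncts) i)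
  | ex _ ih =>
    refine CohCoveredBy.ex_iff.mpr (ih.trans fun φ' hφ' => .of_provable (.exAdj₂ (.id _)) ?_)
    exact Set.mem_image_of_mem _ (Set.mem_image_of_mem _ hφ')

end Formula.IsCoherent

theorem GeomProvable.cohCoveredBy_disjuncts (hT : T.IsCoherent) {s : GeomSequent S}
    (h : GeomProvable T s) : ∀ χ ∈ s.lhs.disjuncts, CohCoveredBy T χ s.rhs.disjuncts := by
  induction h with
  | ax hs =>
    intro χ hχ
    obtain ⟨hlhs, hrhs⟩ := hT _ hs
    exact .cut (.cut (hlhs.cohProvable_of_mem_disjuncts hχ) (.ax hs)) hrhs.cohCoveredBy_disjuncts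
  | id _ => exact fun _ => .of_mem
  | cut _ _ ih₁ ih₂ => exact fun χ hχ => (ih₁ χ hχ).trans ih₂
  | subst σ _ ih =>
    intro χ hχ
    rw [Formula.disjuncts_subst] at hχ ⊢
    obtain ⟨χ, hχ, rfl⟩ := hχ
    exact (ih χ hχ).subst σ
  | trueIntro _ => exact fun χ _ => .of_provable (.trueIntro χ) rfl
  | falseElim _ => rintro χ rfl; exact .false
  | conjIntro _ _ ih₁ ih₂ => exact fun χ hχ => (ih₁ χ hχ).conj (ih₂ χ hχ)
  | conjElimL _ _ => rintro _ ⟨φ', hφ', ψ', -, rfl⟩; exact .of_provable (.conjElimL _ _) hφ'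
  | conjElimR _ _ => rintro _ ⟨-, -, ψ', hψ', rfl⟩; exact .of_provable (.conjElimR _ _) hψ'
  | disjIntro _ _ i => exact fun χ hχ => .of_mem (Set.mem_iUnion_of_mem i hχ)
  | disjElim _ _ ih => exact fun χ hχ => (Set.mem_iUnion.mp hχ).elim fun i => ih i χ
  | distrib _ _ _ =>
    rintro _ ⟨φ', hφ', ψ', hψ', rfl⟩
    obtain ⟨i, hi⟩ := Set.mem_iUnion.mp hψ'
    exact .of_mem (Set.mem_iUnion_of_mem i (Set.mem_image2_of_mem hφ' hi))
  | exAdj₁ _ ih =>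
    rintro _ ⟨φ', hφ', rfl⟩
    have := ih φ' hφ'
    rw [Formula.disjuncts_subst] at this
    exact CohCoveredBy.ex_iff.mpr this
  | exAdj₂ _ ih =>
    intro χ hχ
    rw [Formula.disjuncts_subst]
    exact CohCoveredBy.ex_iff.mp (ih _ (Set.mem_image_of_mem _ hχ))
  | frobenius _ _ =>
    rintro _ ⟨φ', hφ', _, ⟨ψ', hψ', rfl⟩, rfl⟩
    exact .of_provable (.frobenius φ' ψ') <| Set.mem_image_of_mem _ <|
      Set.mem_image2_of_mem (Formula.subst_mem_disjuncts_subst _ hφ') hψ'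
  | eqRefl t => rintro χ rfl; exact .of_provable (.eqRefl t) rfl
  | eqSubst t u _ =>
    rintro _ ⟨_, rfl, _, hφ', rfl⟩
    rw [Formula.disjuncts_subst] at hφ'
    obtain ⟨φ', hφ', rfl⟩ := hφ'
    exact .of_provable (.eqSubst t u φ') (Formula.subst_mem_disjuncts_subst _ hφ')

end Conservativity

/-- For a coherent theory `T`, a coherent sequent is provable from `T` in coherent logic
iff it is provable from `T` in geometric logic. -/
theorem cohProvable_iff_geomProvable {S : GeomSignature.{u}} (T : GeomTheory S)
    (hT : T.IsCoherent) (σ : GeomSequent S) (hσ : σ.IsCoherent) :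
    CohProvable T σ ↔ GeomProvable T σ := by
  refine ⟨CohProvable.geomProvable, fun h => ?_⟩
  obtain ⟨Γ, φ, ψ⟩ := σ
  obtain ⟨hφ, hψ⟩ := hσ
  exact (hφ.cohCoveredBy_disjuncts.trans (h.cohCoveredBy_disjuncts hT)).cohProvable
    fun _ => hψ.cohProvable_of_mem_disjuncts
end
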